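/- arXiv:2506.22344 — 5 statements merged into one kernel-verified Lean document; each statement's English description precedes it below -/
import Mathlib

section
/- If an EOS event e = ⟨τ, θ⟩ is enabled on nested marking μ with mode (λ, ρ) (i.e., Φ(e,λ,ρ) holds and λ ⊑ μ) and μ' = μ - λ + ρ, then Π¹(μ') = Π¹(μ) - pre_{N̂}(τ) + post_{N̂}(τ), i.e., the system-net projection of an EOS step is exactly a Petri net firing step of τ in the system net. -/
/-- If an EOS event `⟨τ, θ⟩` is enabled on nested marking `μ` with mode
`(λ, ρ)` (so `Π¹(λ) = pre(τ)`, `Π¹(ρ) = post(τ)`, `λ ⊑ μ`) and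
`μ' = μ - λ + ρ`, then the system-net projection of the step is exactly a
Petri-net firing step: `Π¹(μ') = Π¹(μ) - pre(τ) + post(τ)`. -/
theorem eos_step_proj1 {Phat M : Type*} [DecidableEq Phat] [DecidableEq M]
    (pre post : Multiset Phat)
    (lam rho mu mu' : Multiset (Phat × M))
    (hpre : lam.map Prod.fst = pre)
    (hpost : rho.map Prod.fst = post)
    (hle : lam ≤ mu)
    (hstep : mu' = mu - lam + rho) :
    mu'.map Prod.fst = mu.map Prod.fst - pre + post := by
  obtain ⟨k, rfl⟩ := Multiset.le_iff_exists_add.mp hle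
  subst hstep hpre hpost
  simp [Multiset.map_add]
end

section
/- If an EOS event e = ⟨τ, θ⟩ is enabled on μ with mode (λ, ρ) and μ' = μ - λ + ρ, then for every object net N ∈ 𝒩 one has Π²_N(μ') = Π²_N(μ) - pre_N(θ(N)) + post_N(θ(N)), where subtraction is exact because pre_N(θ(N)) ≤ Π²_N(λ) ≤ Π²_N(μ). -/
/-- Object-level projection: sum of internal markings of tokens on places of
type `n`. -/
def proj2 {Phat Nty Q : Type*} [DecidableEq Nty] (d : Phat → Nty) (n : Nty)
    (μ : Multiset (Phat × Multiset Q)) : Multiset Q :=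
  ((μ.filter fun c => d c.1 = n).map Prod.snd).sum

lemma proj2_add {Phat Nty Q : Type*} [DecidableEq Nty] (d : Phat → Nty) (n : Nty)
    (a b : Multiset (Phat × Multiset Q)) :
    proj2 d n (a + b) = proj2 d n a + proj2 d n b := by
  simp [proj2, Multiset.filter_add]

/-- If an EOS event `⟨τ, θ⟩` is enabled on `μ` with mode `(λ, ρ)` and
`μ' = μ - λ + ρ`, then for every object net type `n`,
`Π²_n(μ') = Π²_n(μ) - pre_n(θ(n)) + post_n(θ(n))`, where the subtraction is
exact because `pre_n(θ(n)) ≤ Π²_n(λ) ≤ Π²_n(μ)`. -/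
theorem eos_step_proj2 {Phat Nty Q : Type*} [DecidableEq Phat] [DecidableEq Nty] [DecidableEq Q]
    (d : Phat → Nty) (n : Nty)
    (preN postN : Multiset Q)
    (lam rho mu mu' : Multiset (Phat × Multiset Q))
    (hpreN : preN ≤ proj2 d n lam)
    (hpostN : proj2 d n rho = proj2 d n lam - preN + postN)
    (hle : lam ≤ mu)
    (hstep : mu' = mu - lam + rho) :
    preN ≤ proj2 d n mu ∧
    proj2 d n mu' = proj2 d n mu - preN + postN := by
  obtain ⟨t, rfl⟩ := Multiset.le_iff_exists_add.mp hle
  obtain ⟨s, hs⟩ := Multiset.le_iff_exists_add.mp hpreN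
  have hsub : lam + t - lam = t := by
    rw [add_comm, add_tsub_cancel_right]
  have hmu : proj2 d n (lam + t) = preN + s + proj2 d n t := by
    rw [proj2_add, hs]
  constructor
  · rw [hmu]
    exact le_add_right (Multiset.le_add_right _ _)
  · rw [hstep, hsub, proj2_add, hpostN, hs, hmu,
      add_comm preN s, add_tsub_cancel_right,
      add_comm s preN, add_assoc, add_tsub_cancel_left]
    abel
end

section
/- Firing a c-νPN transition t changes the total token count by a fixed amount: if M →^{t,e} M' then Σ_{m ∈ M'} Σ_{p ∈ P} m(p) = Σ_{m ∈ M} Σ_{p ∈ P} m(p) - Σ_{x ∈ 𝒳(t)} Σ_{p} F_x(p,t) + Σ_{x ∈ 𝒳(t) ∪ Υ(t)} Σ_{p} F_x(t,p), independent of the mode e. -/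
lemma map_sum_singletons {ι α β : Type*} [Fintype ι] (f : ι → α) (g : α → β)
    [AddCommMonoid β] :
    (((∑ x : ι, ({f x} : Multiset α)).map g).sum) = ∑ x : ι, g (f x) := by
  classical
  induction (Finset.univ : Finset ι) using Finset.induction with
  | empty => simp
  | insert _ _ h ih => simp [Finset.sum_insert h, ih]

lemma transfer_swap {X P : Type*} [Fintype X] [Fintype P] (a : X → P → ℕ)
    (G : X → X → P → P → ℕ)
    (hG : ∀ (xi : X) (p : P), (∑ xj : X, ∑ q : P, G xi xj p q) = 1) :
    (∑ x : X, ∑ q : P, ∑ xi : X, ∑ p : P, a xi p * G xi x p q)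
      = ∑ xi : X, ∑ p : P, a xi p := by
  calc (∑ x : X, ∑ q : P, ∑ xi : X, ∑ p : P, a xi p * G xi x p q)
      = ∑ x : X, ∑ xi : X, ∑ q : P, ∑ p : P, a xi p * G xi x p q :=
        Finset.sum_congr rfl fun x _ => Finset.sum_comm
    _ = ∑ xi : X, ∑ x : X, ∑ q : P, ∑ p : P, a xi p * G xi x p q := Finset.sum_comm
    _ = ∑ xi : X, ∑ x : X, ∑ p : P, ∑ q : P, a xi p * G xi x p q :=
        Finset.sum_congr rfl fun _ _ => Finset.sum_congr rfl fun _ _ => Finset.sum_comm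
    _ = ∑ xi : X, ∑ p : P, ∑ x : X, ∑ q : P, a xi p * G xi x p q :=
        Finset.sum_congr rfl fun _ _ => Finset.sum_comm
    _ = ∑ xi : X, ∑ p : P, a xi p := by
        simp [← Finset.mul_sum, hG]

/-- Firing a c-νPN transition changes the total token count by a fixed amount
(independent of the mode): assuming the transfer matrices have exactly one `1`
in each row-family (token conservation of transfers), the total count of the
result is the old total, minus the pre-condition tokens of the standard
variables, plus all post-condition tokens (standard and fresh variables). -/
theorem cnuPN_token_count {P X U : Type*} [Fintype P] [Fintype X] [Fintype U]
    (Fpre : X → P → ℕ) (FpostX : X → P → ℕ) (FpostU : U → P → ℕ)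
    (G : X → X → P → P → ℕ)
    (hG : ∀ (xi : X) (p : P), (∑ xj : X, ∑ q : P, G xi xj p q) = 1)
    (M'' : Multiset (P → ℕ)) (m : X → P → ℕ)
    (hen : ∀ x p, Fpre x p ≤ m x p)
    (m' : X → P → ℕ)
    (hm' : ∀ x q, m' x q
      = (∑ xi : X, ∑ p : P, (m xi p - Fpre xi p) * G xi x p q) + FpostX x q)
    (M M' : Multiset (P → ℕ))
    (hM : M = M'' + ∑ x : X, ({m x} : Multiset (P → ℕ)))
    (hM' : M' = M'' + (∑ u : U, ({FpostU u} : Multiset (P → ℕ)))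
      + ∑ x : X, ({m' x} : Multiset (P → ℕ))) :
    (M'.map fun t => ∑ p : P, t p).sum
      = (M.map fun t => ∑ p : P, t p).sum
        - (∑ x : X, ∑ p : P, Fpre x p)
        + ((∑ x : X, ∑ p : P, FpostX x p) + ∑ u : U, ∑ p : P, FpostU u p) := by
  classical
  subst hM hM'
  simp only [Multiset.map_add, Multiset.sum_add, map_sum_singletons]
  have hsub : (∑ x : X, ∑ p : P, (m x p - Fpre x p))
      = (∑ x : X, ∑ p : P, m x p) - (∑ x : X, ∑ p : P, Fpre x p) := by
    rw [← Finset.sum_tsub_distrib]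
    · refine Finset.sum_congr rfl fun x _ => ?_
      rw [← Finset.sum_tsub_distrib]
      intro p _; exact hen x p
    · intro x _
      exact Finset.sum_le_sum fun p _ => hen x p
  have hle : (∑ x : X, ∑ p : P, Fpre x p) ≤ ∑ x : X, ∑ p : P, m x p :=
    Finset.sum_le_sum fun x _ => Finset.sum_le_sum fun p _ => hen x p
  have hkey : (∑ x : X, ∑ q : P, m' x q)
      = ((∑ x : X, ∑ p : P, m x p) - (∑ x : X, ∑ p : P, Fpre x p))
        + ∑ x : X, ∑ q : P, FpostX x q := by
    simp only [hm', Finset.sum_add_distrib]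
    rw [transfer_swap _ G hG, hsub]
  rw [hkey, Nat.add_sub_assoc hle]
  ring
end

section
/- The encoding of EOS configurations into c-νPN configurations is additive and injective: the map 𝒦 sending a nested token ⟨p̂, m⟩ (with d(p̂) = N and m a marking of N) to the tuple Σ_{p ∈ P_N} m(p)·δ_{p^{p̂}} + δ_{Id_{p̂}} over the disjoint union of place copies, extended to nested markings by 𝒦(Σᵢ cᵢ) = Σᵢ {{𝒦(cᵢ)}}, satisfies 𝒦(M₁ + M₂) = 𝒦(M₁) + 𝒦(M₂) and 𝒦(M₁) = 𝒦(M₂) implies M₁ = M₂. -/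
/-- Encoding of a nested token `⟨p̂, m⟩` as a tuple over the target places:
one copy `Sum.inl (p̂, q)` of each object place `q` per system place `p̂`, plus
one identifier place `Sum.inr p̂` per system place.  The encoding puts `m(q)`
tokens on the copy `q^{p̂}` and one token on `Id_{p̂}`. -/
def encTok {Ph Q : Type*} [DecidableEq Ph] [DecidableEq Q]
    (c : Ph × Multiset Q) : ((Ph × Q) ⊕ Ph) → ℕ :=
  fun x =>
    match x with
    | .inl pq => if pq.1 = c.1 then c.2.count pq.2 else 0
    | .inr ph => if ph = c.1 then 1 else 0

/-- Encoding of a nested marking: the multiset of the encodings of its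
nested tokens. -/
def encM {Ph Q : Type*} [DecidableEq Ph] [DecidableEq Q]
    (M : Multiset (Ph × Multiset Q)) : Multiset (((Ph × Q) ⊕ Ph) → ℕ) :=
  M.map encTok

lemma encTok_injective {Ph Q : Type*} [DecidableEq Ph] [DecidableEq Q] :
    Function.Injective (encTok (Ph := Ph) (Q := Q)) := by
  intro c c' h
  have h1 := congrFun h (Sum.inr c.1)
  simp only [encTok, if_pos rfl] at h1
  have hph : c.1 = c'.1 := by
    by_contra hne
    rw [if_neg hne] at h1
    exact one_ne_zero h1
  have hm : c.2 = c'.2 := by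
    ext q
    have h2 := congrFun h (Sum.inl (c.1, q))
    simpa [encTok, hph] using h2
  exact Prod.ext hph hm

/-- The encoding of EOS configurations into c-νPN configurations is additive
and injective. -/
theorem encoding_additive_injective {Ph Q : Type*}
    [DecidableEq Ph] [DecidableEq Q]
    (M₁ M₂ : Multiset (Ph × Multiset Q)) :
    encM (M₁ + M₂) = encM M₁ + encM M₂ ∧
    (encM M₁ = encM M₂ → M₁ = M₂) := by
  refine ⟨Multiset.map_add _ _ _, fun h => ?_⟩
  exact Multiset.map_injective encTok_injective h
end

section
/- νPN firing is strongly compatible with the configuration embedding order: if M →^{t,e} M' in a νPN and M ⊑_e N, where ⊑_e is the order on configurations given by 'N contains, for each tuple of M, a distinct tuple that dominates it componentwise, plus possibly extra tuples', then there exists a mode e' and a configuration N' with N →^{t,e'} N' and M' ⊑_e N'. -/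
/-- The configuration embedding order `⊑_e`: `N` contains, for each tuple of
`M`, a distinct tuple dominating it componentwise, plus possibly extra
tuples. -/
def emb {P : Type*} (M N : Multiset (P → ℕ)) : Prop :=
  ∃ N₀ ≤ N, Multiset.Rel (fun a b => ∀ p, a p ≤ b p) M N₀

lemma rel_sum_extract {X : Type*} {α : Type*} (r : α → α → Prop) (m : X → α)
    [DecidableEq X] :
    ∀ (s : Finset X) (C : Multiset α),
      Multiset.Rel r (∑ x ∈ s, ({m x} : Multiset α)) C →
      ∃ n : X → α, C = ∑ x ∈ s, ({n x} : Multiset α) ∧ ∀ x ∈ s, r (m x) (n x) := by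
  intro s
  induction s using Finset.induction_on with
  | empty =>
    intro C h
    simp only [Finset.sum_empty] at h
    rw [Multiset.rel_zero_left] at h
    exact ⟨m, by simp [h], by simp⟩
  | @insert a s ha ih =>
    intro C h
    rw [Finset.sum_insert ha] at h
    rw [Multiset.rel_add_left] at h
    obtain ⟨C₁, C₂, h1, h2, hC⟩ := h
    have h1' : Multiset.Rel r (m a ::ₘ 0) C₁ := by simpa using h1
    rw [Multiset.rel_cons_left] at h1'
    obtain ⟨b, t', hab, ht', hC₁⟩ := h1'
    rw [Multiset.rel_zero_left] at ht'
    obtain ⟨n', hn1, hn2⟩ := ih C₂ h2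
    refine ⟨fun x => if x = a then b else n' x, ?_, ?_⟩
    · rw [hC, Finset.sum_insert ha, hC₁, ht', hn1]
      congr 1
      · show (b ::ₘ 0) = ({if a = a then b else n' a} : Multiset α)
        simp
      · exact Finset.sum_congr rfl fun x hx => by
          show ({n' x} : Multiset α) = {if x = a then b else n' x}
          rw [if_neg (fun h : x = a => ha (h ▸ hx))]
    · intro x hx
      rcases Finset.mem_insert.mp hx with rfl | hx
      · simpa using hab
      · show r (m x) (if x = a then b else n' x)
        rw [if_neg (fun h : x = a => ha (h ▸ hx))]; exact hn2 x hx

lemma rel_sum_map {X : Type*} {α : Type*} (r : α → α → Prop) (f g : X → α)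
    (s : Finset X) (h : ∀ x ∈ s, r (f x) (g x)) :
    Multiset.Rel r (∑ x ∈ s, ({f x} : Multiset α)) (∑ x ∈ s, ({g x} : Multiset α)) := by
  induction s using Finset.cons_induction with
  | empty => simp [Multiset.rel_zero_left]
  | @cons a s ha ih =>
    rw [Finset.sum_cons, Finset.sum_cons]
    apply Multiset.Rel.add
    · have : r (f a) (g a) := h a (Finset.mem_cons_self a s)
      simpa using Multiset.Rel.cons this Multiset.Rel.zero
    · exact ih fun x hx => h x (Finset.mem_cons_of_mem hx)

/-- νPN firing is strongly compatible with the embedding order: if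
`M →^{t,e} M'` (with standard variables `X` selecting tuples `m x`, fresh
variables `U` creating tuples `FpostU u`) and `M ⊑_e N`, then there is a mode
for `t` on `N` (a decomposition `N = N'' + Σ_x {n x}` with `t` enabled) whose
firing yields some `N'` with `M' ⊑_e N'`. -/
theorem nuPN_strongly_compatible {P X U : Type*} [Fintype X] [Fintype U]
    (Fpre FpostX : X → P → ℕ) (FpostU : U → P → ℕ)
    (M'' M M' : Multiset (P → ℕ)) (m : X → P → ℕ)
    (hM : M = M'' + ∑ x : X, ({m x} : Multiset (P → ℕ)))
    (hen : ∀ x p, Fpre x p ≤ m x p)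
    (hM' : M' = M'' + (∑ u : U, ({FpostU u} : Multiset (P → ℕ)))
      + ∑ x : X, ({fun p => m x p - Fpre x p + FpostX x p} : Multiset (P → ℕ)))
    (Nc : Multiset (P → ℕ)) (hemb : emb M Nc) :
    ∃ (N'' : Multiset (P → ℕ)) (n : X → P → ℕ),
      Nc = N'' + ∑ x : X, ({n x} : Multiset (P → ℕ)) ∧
      (∀ x p, Fpre x p ≤ n x p) ∧
      emb M' (N'' + (∑ u : U, ({FpostU u} : Multiset (P → ℕ)))
        + ∑ x : X, ({fun p => n x p - Fpre x p + FpostX x p} :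
            Multiset (P → ℕ))) := by
  classical
  obtain ⟨N₀, hN₀, hrel⟩ := hemb
  rw [hM, Multiset.rel_add_left] at hrel
  obtain ⟨C'', C, hrel'', hrelC, hN₀eq⟩ := hrel
  obtain ⟨n, hCeq, hn⟩ := rel_sum_extract _ m Finset.univ C hrelC
  obtain ⟨R, hR⟩ := Multiset.le_iff_exists_add.mp hN₀
  refine ⟨C'' + R, n, ?_, ?_, ?_⟩
  · rw [hR, hN₀eq, hCeq]; abel
  · intro x p
    exact le_trans (hen x p) (hn x (Finset.mem_univ x) p)
  · refine ⟨C'' + (∑ u : U, ({FpostU u} : Multiset (P → ℕ)))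
      + ∑ x : X, ({fun p => n x p - Fpre x p + FpostX x p} : Multiset (P → ℕ)),
      ?_, ?_⟩
    · exact Multiset.le_iff_exists_add.mpr ⟨R, by abel⟩
    · rw [hM']
      apply Multiset.Rel.add
      apply Multiset.Rel.add
      · exact hrel''
      · exact rel_sum_map _ _ _ _ (fun u _ => fun p => le_rfl)
      · refine rel_sum_map _ _ _ _ (fun x _ => fun p => ?_)
        exact Nat.add_le_add_right (Nat.sub_le_sub_right (hn x (Finset.mem_univ x) p) _) _
end
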